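/- arXiv:2106.02173 — 2 statements merged into one kernel-verified Lean document; each statement's English description precedes it below -/
import Mathlib

section
/- Let G be a finite simple graph without isolated vertices, with maximum degree Δ, and let a < 0 be a real number. Then ISD_a(G) ≤ (1/2)·Δ^{-a}·AG(G), and equality holds if and only if G is regular. -/
open Finset Real

/-- The variable inverse sum deg index
`ISD_a(G) = Σ_{uv ∈ E(G)} 1/(d_u^a + d_v^a)`. -/
noncomputable def ISD {V : Type*} [Fintype V] [DecidableEq V] (G : SimpleGraph V)
    [DecidableRel G.Adj] (a : ℝ) : ℝ :=
  ∑ e ∈ G.edgeFinset,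
    Sym2.lift ⟨fun u v => 1 / ((G.degree u : ℝ) ^ a + (G.degree v : ℝ) ^ a),
      fun u v => by simp [add_comm]⟩ e

/-- The arithmetic-geometric index `AG(G) = Σ_{uv ∈ E(G)} (d_u + d_v)/(2√(d_u d_v))`. -/
noncomputable def arithGeomIndex {V : Type*} [Fintype V] [DecidableEq V] (G : SimpleGraph V)
    [DecidableRel G.Adj] : ℝ :=
  ∑ e ∈ G.edgeFinset,
    Sym2.lift ⟨fun u v => ((G.degree u : ℝ) + (G.degree v : ℝ)) /
        (2 * Real.sqrt ((G.degree u : ℝ) * (G.degree v : ℝ))),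
      fun u v => by dsimp only; rw [mul_comm ((G.degree u : ℝ)), add_comm ((G.degree u : ℝ))]⟩ e

/-!
On an edge `uv` with `a < 0`, both `d_u ^ a` and `d_v ^ a` are at least `Δ ^ a`, so the ISD summand is
at most `Δ ^ (-a) / 2`, while the AG summand is at least `1` by AM–GM. Summing over the edges gives the
inequality. Equality forces `d_u = d_v = Δ` on every edge, since `t ↦ t ^ a` is strictly decreasing;
as there are no isolated vertices, every vertex lies on an edge and the graph is `Δ`-regular.
-/

namespace Real

variable {a x y D : ℝ}

lemma two_mul_sqrt_mul_le_add (hx : 0 ≤ x) (hy : 0 ≤ y) : 2 * √(x * y) ≤ x + y := by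
  nlinarith [sq_nonneg (√x - √y), sq_sqrt hx, sq_sqrt hy, sqrt_mul hx y]

lemma one_le_add_div_two_mul_sqrt_mul (hx : 0 < x) (hy : 0 < y) :
    1 ≤ (x + y) / (2 * √(x * y)) :=
  (one_le_div (by positivity)).2 (two_mul_sqrt_mul_le_add hx.le hy.le)

lemma half_mul_rpow_neg (hD : 0 ≤ D) : 1 / 2 * D ^ (-a) = 1 / (2 * D ^ a) := by
  rw [rpow_neg hD, one_div_mul_eq_div, div_eq_mul_inv, one_div, mul_inv, mul_comm]

lemma two_mul_rpow_le_rpow_add_rpow (ha : a ≤ 0) (hx : 0 < x) (hy : 0 < y) (hxD : x ≤ D)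
    (hyD : y ≤ D) : 2 * D ^ a ≤ x ^ a + y ^ a := by
  linarith [rpow_le_rpow_of_nonpos hx hxD ha, rpow_le_rpow_of_nonpos hy hyD ha]

lemma one_div_rpow_add_rpow_le_mul (ha : a ≤ 0) (hx : 0 < x) (hy : 0 < y) (hxD : x ≤ D)
    (hyD : y ≤ D) : 1 / (x ^ a + y ^ a) ≤ 1 / 2 * D ^ (-a) * ((x + y) / (2 * √(x * y))) :=
  have hD : 0 < D := hx.trans_le hxD
  calc 1 / (x ^ a + y ^ a)
      ≤ 1 / (2 * D ^ a) := one_div_le_one_div_of_le (by positivity)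
        (two_mul_rpow_le_rpow_add_rpow ha hx hy hxD hyD)
    _ = 1 / 2 * D ^ (-a) := (half_mul_rpow_neg hD.le).symm
    _ ≤ 1 / 2 * D ^ (-a) * ((x + y) / (2 * √(x * y))) :=
      le_mul_of_one_le_right (by positivity) (one_le_add_div_two_mul_sqrt_mul hx hy)

lemma one_div_rpow_add_rpow_eq_mul_iff (ha : a < 0) (hx : 0 < x) (hy : 0 < y) (hxD : x ≤ D)
    (hyD : y ≤ D) :
    1 / (x ^ a + y ^ a) = 1 / 2 * D ^ (-a) * ((x + y) / (2 * √(x * y))) ↔ x = D ∧ y = D := by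
  have hD : 0 < D := hx.trans_le hxD
  constructor
  · intro heq
    have hsum : x ^ a + y ^ a = 2 * D ^ a := by
      have hmid : 1 / (x ^ a + y ^ a) = 1 / (2 * D ^ a) := by
        refine le_antisymm (one_div_le_one_div_of_le (by positivity)
          (two_mul_rpow_le_rpow_add_rpow ha.le hx hy hxD hyD)) ?_
        rw [← half_mul_rpow_neg hD.le, heq]
        exact le_mul_of_one_le_right (by positivity) (one_le_add_div_two_mul_sqrt_mul hx hy)
      exact inv_inj.1 (by simpa only [one_div] using hmid)
    have hxa := rpow_le_rpow_of_nonpos hx hxD ha.le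
    have hya := rpow_le_rpow_of_nonpos hy hyD ha.le
    exact ⟨(rpow_left_inj hx.le hD.le ha.ne).1 (by linarith),
      (rpow_left_inj hy.le hD.le ha.ne).1 (by linarith)⟩
  · rintro ⟨rfl, rfl⟩
    rw [sqrt_mul_self hx.le, rpow_neg hx.le]
    have hDa := rpow_pos_of_pos hD a
    field_simp
    ring

end Real

namespace SimpleGraph

variable {V : Type*} [Fintype V] (G : SimpleGraph V) [DecidableRel G.Adj]

lemma cast_degree_pos_of_adj {u v : V} (huv : G.Adj u v) : (0 : ℝ) < G.degree u :=
  Nat.cast_pos.2 ((G.degree_pos_iff_exists_adj u).2 ⟨v, huv⟩)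

lemma cast_degree_le_maxDegree (v : V) : (G.degree v : ℝ) ≤ G.maxDegree :=
  Nat.cast_le.2 (G.degree_le_maxDegree v)

lemma one_div_degree_rpow_add_le_mul {a : ℝ} (ha : a ≤ 0) {u v : V} (huv : G.Adj u v) :
    1 / ((G.degree u : ℝ) ^ a + (G.degree v : ℝ) ^ a) ≤ 1 / 2 * (G.maxDegree : ℝ) ^ (-a) *
      (((G.degree u : ℝ) + G.degree v) / (2 * √((G.degree u : ℝ) * G.degree v))) :=
  Real.one_div_rpow_add_rpow_le_mul ha (G.cast_degree_pos_of_adj huv)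
    (G.cast_degree_pos_of_adj huv.symm) (G.cast_degree_le_maxDegree u) (G.cast_degree_le_maxDegree v)

lemma one_div_degree_rpow_add_eq_mul_iff {a : ℝ} (ha : a < 0) {u v : V} (huv : G.Adj u v) :
    1 / ((G.degree u : ℝ) ^ a + (G.degree v : ℝ) ^ a) = 1 / 2 * (G.maxDegree : ℝ) ^ (-a) *
      (((G.degree u : ℝ) + G.degree v) / (2 * √((G.degree u : ℝ) * G.degree v))) ↔
      G.degree u = G.maxDegree ∧ G.degree v = G.maxDegree := by
  rw [Real.one_div_rpow_add_rpow_eq_mul_iff ha (G.cast_degree_pos_of_adj huv)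
    (G.cast_degree_pos_of_adj huv.symm) (G.cast_degree_le_maxDegree u)
    (G.cast_degree_le_maxDegree v)]
  norm_cast

lemma forall_mem_edgeFinset {P : Sym2 V → Prop} :
    (∀ e ∈ G.edgeFinset, P e) ↔ ∀ u v, G.Adj u v → P s(u, v) := by
  refine ⟨fun h u v huv => h _ (G.mem_edgeFinset.2 huv), fun h e he => ?_⟩
  induction e using Sym2.ind with
  | _ u v => exact h u v (G.mem_edgeFinset.1 he)

lemma forall_adj_degree_eq_maxDegree_iff (hiso : ∀ v, 0 < G.degree v) :
    (∀ u v, G.Adj u v → G.degree u = G.maxDegree ∧ G.degree v = G.maxDegree) ↔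
      ∃ k, ∀ v, G.degree v = k := by
  refine ⟨fun h => ⟨G.maxDegree, fun v => ?_⟩, fun ⟨k, hk⟩ u v huv => ?_⟩
  · obtain ⟨w, hvw⟩ := (G.degree_pos_iff_exists_adj v).1 (hiso v)
    exact (h v w hvw).1
  · have : Nonempty V := ⟨u⟩
    rw [IsRegularOfDegree.maxDegree_eq (G := G) hk]
    exact ⟨hk u, hk v⟩

variable [DecidableEq V] {a : ℝ}

theorem ISD_le (ha : a ≤ 0) : ISD G a ≤ 1 / 2 * (G.maxDegree : ℝ) ^ (-a) * arithGeomIndex G := by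
  rw [ISD, arithGeomIndex, mul_sum]
  exact sum_le_sum <| (G.forall_mem_edgeFinset).2 fun _ _ huv =>
    G.one_div_degree_rpow_add_le_mul ha huv

theorem ISD_eq_iff (ha : a < 0) :
    ISD G a = 1 / 2 * (G.maxDegree : ℝ) ^ (-a) * arithGeomIndex G ↔
      ∀ u v, G.Adj u v → G.degree u = G.maxDegree ∧ G.degree v = G.maxDegree := by
  rw [ISD, arithGeomIndex, mul_sum, sum_eq_sum_iff_of_le ((G.forall_mem_edgeFinset).2
    fun _ _ huv => G.one_div_degree_rpow_add_le_mul ha.le huv), forall_mem_edgeFinset]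
  exact forall₃_congr fun _ _ huv => G.one_div_degree_rpow_add_eq_mul_iff ha huv

end SimpleGraph

theorem stmt_12_general {V : Type*} [Fintype V] [DecidableEq V] (G : SimpleGraph V)
    [DecidableRel G.Adj] (hiso : ∀ v : V, 0 < G.degree v) (a : ℝ) (ha : a < 0) :
    ((ISD G a ≤ 1 / 2 * (G.maxDegree : ℝ) ^ (-a) * arithGeomIndex G) ∧
    (ISD G a = 1 / 2 * (G.maxDegree : ℝ) ^ (-a) * arithGeomIndex G ↔ ∃ k, ∀ v : V, G.degree v = k)) :=
  ⟨G.ISD_le ha.le, (G.ISD_eq_iff ha).trans (G.forall_adj_degree_eq_maxDegree_iff hiso)⟩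

theorem stmt_12 {V : Type*} [Fintype V] [DecidableEq V] [Nonempty V] (G : SimpleGraph V)
    [DecidableRel G.Adj] (hiso : ∀ v : V, 0 < G.degree v) (a : ℝ) (ha : a < 0) :
    ((ISD G a ≤ 1 / 2 * (G.maxDegree : ℝ) ^ (-a) * arithGeomIndex G) ∧
    (ISD G a = 1 / 2 * (G.maxDegree : ℝ) ^ (-a) * arithGeomIndex G ↔ ∃ k, ∀ v : V, G.degree v = k)) :=
  stmt_12_general G hiso a ha
end

section
/- Let G be a finite simple graph without isolated vertices with m edges and minimum degree δ, and let a > 0 be a real number. Then ISD_a(G) + M_1^{a+1}(G) ≥ (2δ^a + 1/(2δ^a))·m, and equality holds if and only if G is regular. -/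
open Finset Real

/-- The variable first Zagreb index `M₁^α(G) = Σ_{u ∈ V(G)} d_u^α`. -/
noncomputable def varZagreb1 {V : Type*} [Fintype V] (G : SimpleGraph V)
    [DecidableRel G.Adj] (α : ℝ) : ℝ :=
  ∑ u : V, (G.degree u : ℝ) ^ α

/-! With `t_e = d_u^a + d_v^a` for an edge `e = uv`, the weighted handshake identity
`Σ_v d_v^(a+1) = Σ_{uv} (d_u^a + d_v^a)` turns `ISD_a + M₁^(a+1)` into `Σ_e (t_e + 1/t_e)`.
Every `t_e ≥ 2δ^a ≥ 2` and `x ↦ x + 1/x` is strictly increasing on `[1, ∞)`, so each term is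
at least `2δ^a + 1/(2δ^a)`, with equality exactly when both ends of `e` have degree `δ`. As no
vertex is isolated, equality in the sum means that every degree equals `δ`. -/

theorem strictMonoOn_add_one_div : StrictMonoOn (fun x : ℝ => x + 1 / x) (Set.Ici 1) := by
  intro x (hx : 1 ≤ x) y (hy : 1 ≤ y) hxy
  have hxy1 : 0 < x * y - 1 := by nlinarith
  have key : y + 1 / y - (x + 1 / x) = (y - x) * (x * y - 1) / (x * y) := by
    field_simp
    ring
  have : 0 < (y - x) * (x * y - 1) / (x * y) := by
    have := sub_pos.2 hxy
    positivity
  simp only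
  linarith

namespace SimpleGraph

variable {V : Type*} [Fintype V] (G : SimpleGraph V) [DecidableRel G.Adj]

theorem exists_forall_degree_eq_iff [Nonempty V] :
    (∃ k, ∀ v, G.degree v = k) ↔ ∀ v, G.degree v = G.minDegree :=
  ⟨fun ⟨_, hk⟩ v => (hk v).trans (IsRegularOfDegree.minDegree_eq (G := G) hk).symm, fun h => ⟨_, h⟩⟩

theorem forall_mem_edgeFinset_forall_mem_iff (hiso : ∀ v, 0 < G.degree v) {P : V → Prop} :
    (∀ e ∈ G.edgeFinset, ∀ u ∈ e, P u) ↔ ∀ v, P v := by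
  refine ⟨fun h v => ?_, fun h _ _ u _ => h u⟩
  obtain ⟨w, hvw⟩ := (G.degree_pos_iff_exists_adj v).1 (hiso v)
  exact h s(v, w) (mem_edgeFinset.2 hvw) v (Sym2.mem_mk_left v w)

noncomputable def degRpowSum (a : ℝ) : Sym2 V → ℝ :=
  Sym2.lift ⟨fun u v => (G.degree u : ℝ) ^ a + (G.degree v : ℝ) ^ a, fun _ _ => add_comm _ _⟩

theorem minDegree_rpow_le_degree_rpow {a : ℝ} (ha : 0 ≤ a) (v : V) :
    (G.minDegree : ℝ) ^ a ≤ (G.degree v : ℝ) ^ a :=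
  rpow_le_rpow (Nat.cast_nonneg _) (Nat.cast_le.2 (G.minDegree_le_degree v)) ha

theorem two_mul_minDegree_rpow_le_degRpowSum {a : ℝ} (ha : 0 ≤ a) (e : Sym2 V) :
    2 * (G.minDegree : ℝ) ^ a ≤ G.degRpowSum a e := by
  induction e with
  | _ u v =>
    simp only [degRpowSum, Sym2.lift_mk]
    linarith [G.minDegree_rpow_le_degree_rpow ha u, G.minDegree_rpow_le_degree_rpow ha v]

theorem degRpowSum_eq_two_mul_minDegree_rpow_iff {a : ℝ} (ha : 0 < a) (e : Sym2 V) :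
    G.degRpowSum a e = 2 * (G.minDegree : ℝ) ^ a ↔ ∀ u ∈ e, G.degree u = G.minDegree := by
  have heq (w : V) : (G.degree w : ℝ) ^ a = (G.minDegree : ℝ) ^ a ↔ G.degree w = G.minDegree := by
    rw [rpow_left_inj (Nat.cast_nonneg _) (Nat.cast_nonneg _) ha.ne', Nat.cast_inj]
  induction e with
  | _ u v =>
    simp only [degRpowSum, Sym2.lift_mk, Sym2.forall_mem_pair, ← heq]
    constructor
    · intro h
      constructor <;>
        linarith [G.minDegree_rpow_le_degree_rpow ha.le u, G.minDegree_rpow_le_degree_rpow ha.le v]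
    · rintro ⟨hu, hv⟩
      rw [hu, hv]
      ring

variable [DecidableEq V]

theorem sum_dart_fst {M : Type*} [AddCommMonoid M] (f : V → M) :
    ∑ d : G.Dart, f d.fst = ∑ v, G.degree v • f v := by
  rw [← sum_fiberwise' univ (fun d : G.Dart => d.fst) f]
  refine sum_congr rfl fun v _ => ?_
  rw [sum_const, dart_fst_fiber_card_eq_degree]

theorem sum_edgeFinset_lift_add {M : Type*} [AddCommMonoid M] (f : V → M) :
    ∑ e ∈ G.edgeFinset, Sym2.lift ⟨fun u v => f u + f v, fun u v => add_comm (f u) (f v)⟩ e =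
      ∑ v, G.degree v • f v := by
  rw [← sum_dart_fst, ← sum_fiberwise_of_maps_to (t := G.edgeFinset) (g := Dart.edge)
    (fun d _ => mem_edgeFinset.2 d.edge_mem)]
  refine sum_congr rfl fun e he => ?_
  induction e with
  | _ u v =>
    let d : G.Dart := ⟨(u, v), mem_edgeFinset.1 he⟩
    rw [show ({d' : G.Dart | d'.edge = s(u, v)} : Finset _) = {d, d.symm} from d.edge_fiber,
      sum_pair d.symm_ne.symm]
    rfl

theorem isd_eq_sum_one_div_degRpowSum (a : ℝ) :
    ISD G a = ∑ e ∈ G.edgeFinset, 1 / G.degRpowSum a e :=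
  sum_congr rfl fun e _ => by induction e with | _ u v => rfl

theorem varZagreb1_add_one_eq_sum_degRpowSum {a : ℝ} (ha : a + 1 ≠ 0) :
    varZagreb1 G (a + 1) = ∑ e ∈ G.edgeFinset, G.degRpowSum a e := by
  rw [degRpowSum, sum_edgeFinset_lift_add]
  refine sum_congr rfl fun v _ => ?_
  rw [rpow_add_one' (Nat.cast_nonneg _) ha, nsmul_eq_mul, mul_comm]

end SimpleGraph

open SimpleGraph in
theorem stmt_15 {V : Type*} [Fintype V] [DecidableEq V] [Nonempty V] (G : SimpleGraph V)
    [DecidableRel G.Adj] (hiso : ∀ v : V, 0 < G.degree v) (a : ℝ) (ha : 0 < a) :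
    (((2 * (G.minDegree : ℝ) ^ a + 1 / (2 * (G.minDegree : ℝ) ^ a)) * (G.edgeFinset.card : ℝ) ≤
      ISD G a + varZagreb1 G (a + 1)) ∧
    (ISD G a + varZagreb1 G (a + 1) =
        (2 * (G.minDegree : ℝ) ^ a + 1 / (2 * (G.minDegree : ℝ) ^ a)) * (G.edgeFinset.card : ℝ) ↔
      ∃ k, ∀ v : V, G.degree v = k)) := by
  set c := 2 * (G.minDegree : ℝ) ^ a
  have hc : 1 ≤ c := by
    obtain ⟨v₀, hv₀⟩ := G.exists_minimal_degree_vertex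
    have : (1 : ℝ) ≤ G.minDegree := Nat.one_le_cast.2 (hv₀ ▸ hiso v₀)
    linarith [one_le_rpow this ha.le]
  have hweight (e : Sym2 V) : G.degRpowSum a e ∈ Set.Ici 1 :=
    hc.trans (G.two_mul_minDegree_rpow_le_degRpowSum ha.le e)
  have hsum : ISD G a + varZagreb1 G (a + 1) =
      ∑ e ∈ G.edgeFinset, (G.degRpowSum a e + 1 / G.degRpowSum a e) := by
    rw [isd_eq_sum_one_div_degRpowSum, varZagreb1_add_one_eq_sum_degRpowSum G (by linarith),
      ← sum_add_distrib]
    exact sum_congr rfl fun _ _ => add_comm _ _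
  have hconst : (c + 1 / c) * (G.edgeFinset.card : ℝ) = ∑ _e ∈ G.edgeFinset, (c + 1 / c) := by
    rw [sum_const, nsmul_eq_mul, mul_comm]
  have hterm : ∀ e ∈ G.edgeFinset, c + 1 / c ≤ G.degRpowSum a e + 1 / G.degRpowSum a e :=
    fun e _ => strictMonoOn_add_one_div.monotoneOn hc (hweight e)
      (G.two_mul_minDegree_rpow_le_degRpowSum ha.le e)
  refine ⟨by rw [hsum, hconst]; exact sum_le_sum hterm, ?_⟩
  rw [hsum, hconst, eq_comm, sum_eq_sum_iff_of_le hterm, exists_forall_degree_eq_iff,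
    ← forall_mem_edgeFinset_forall_mem_iff G hiso]
  refine forall₂_congr fun e _ => ?_
  rw [strictMonoOn_add_one_div.eq_iff_eq hc (hweight e), eq_comm,
    degRpowSum_eq_two_mul_minDegree_rpow_iff G ha]
end
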